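/- Let p > 1 and μ > 0 and define S(A) = (μ + |A|)^{p-2} A for 3×3 matrices A. Then there exists C₁ > 0 such that for every matrix A and every matrix B: ∑_{i,j,k,l} (∂S_{ij}/∂A_{kl})(A) B_{ij} B_{kl} ≥ C₁ (μ + |A|)^{p-2} |B|². -/

import Mathlib

/-!
Identify 3×3 matrices with `EuclideanSpace ℝ (Fin 3 × Fin 3)`, so that `S` becomes
`x ↦ (μ + ‖x‖)^(p-2) • x` on a real inner product space and the quadratic form is `⟪DS(x) y, y⟫`.
At `x = 0` the derivative is `μ^(p-2) • id`, because `(μ + ‖h‖)^(p-2) - μ^(p-2) → 0`. For `x ≠ 0`,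
with `a = μ + ‖x‖`,
  `⟪DS(x) y, y⟫ = a^(p-3) (a ‖y‖² + (p - 2) ⟪x, y⟫² / ‖x‖)`.
For `p ≥ 2` the second term is nonnegative. For `p < 2`, Cauchy–Schwarz bounds the bracket below by
`(a + (p - 2)‖x‖) ‖y‖² = (μ + (p - 1)‖x‖) ‖y‖² ≥ (p - 1) a ‖y‖²`. So `C₁ = min 1 (p - 1)` works.
-/

open Finset

noncomputable def frobF (A : Fin 3 → Fin 3 → ℝ) : ℝ :=
  Real.sqrt (∑ i, ∑ j, (A i j) ^ 2)

noncomputable def SmapF (μ p : ℝ) (A : Fin 3 → Fin 3 → ℝ) : Fin 3 → Fin 3 → ℝ :=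
  fun i j => (μ + frobF A) ^ (p - 2) * A i j

/-- The unit "basis matrix" with a 1 in entry (k,l). -/
def basisMat (k l : Fin 3) : Fin 3 → Fin 3 → ℝ :=
  fun a b => if a = k ∧ b = l then 1 else 0

open scoped RealInnerProductSpace

theorem hasFDerivAt_smul_self_zero {E : Type*} [NormedAddCommGroup E] [NormedSpace ℝ E]
    {g : E → ℝ} (hg : ContinuousAt g 0) :
    HasFDerivAt (fun x => g x • x) (g 0 • ContinuousLinearMap.id ℝ E) 0 := by
  rw [hasFDerivAt_iff_isLittleO_nhds_zero]
  have hsmall : (fun h => g h - g 0) =o[nhds 0] (fun _ => (1 : ℝ)) :=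
    Asymptotics.isLittleO_one_iff ℝ |>.2 (by simpa using (hg.tendsto.sub_const (g 0)))
  simpa [sub_smul] using hsmall.smul_isBigO (Asymptotics.isBigO_refl (fun h : E => h) _)

section InnerProductSpace

variable {F : Type*} [NormedAddCommGroup F] [InnerProductSpace ℝ F]

theorem hasFDerivAt_norm_of_ne_zero {x : F} (hx : x ≠ 0) :
    HasFDerivAt (‖·‖) (‖x‖⁻¹ • innerSL ℝ x) x := by
  have h := (Real.hasDerivAt_sqrt (by positivity : ‖x‖ ^ 2 ≠ 0)).comp_hasFDerivAt x
    (hasStrictFDerivAt_norm_sq x).hasFDerivAt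
  have hnorm : (fun y : F => √(‖y‖ ^ 2)) = (‖·‖) := by
    funext y; exact Real.sqrt_sq (norm_nonneg y)
  rw [Function.comp_def, hnorm, Real.sqrt_sq (norm_nonneg x)] at h
  refine h.congr_fderiv ?_
  rw [← Nat.cast_smul_eq_nsmul ℝ, smul_smul]
  congr 1
  push_cast
  field_simp

noncomputable def pStress (μ p : ℝ) (x : F) : F := (μ + ‖x‖) ^ (p - 2) • x

variable {μ p : ℝ}

theorem hasFDerivAt_pStress_zero (hμ : 0 < μ) :
    HasFDerivAt (pStress μ p) (μ ^ (p - 2) • ContinuousLinearMap.id ℝ F) 0 := by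
  have hg : ContinuousAt (fun x : F => (μ + ‖x‖) ^ (p - 2)) 0 :=
    (continuous_const.add continuous_norm).continuousAt.rpow_const (Or.inl (by simpa using hμ.ne'))
  have h := hasFDerivAt_smul_self_zero hg
  rwa [norm_zero, add_zero] at h

theorem hasFDerivAt_pStress (hμ : 0 ≤ μ) {x : F} (hx : x ≠ 0) :
    HasFDerivAt (pStress μ p)
      ((μ + ‖x‖) ^ (p - 2) • ContinuousLinearMap.id ℝ F +
        (((p - 2) * (μ + ‖x‖) ^ (p - 3) * ‖x‖⁻¹) • innerSL ℝ x).smulRight x) x := by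
  have ha : 0 < μ + ‖x‖ := by positivity
  have hg : HasFDerivAt (fun x : F => (μ + ‖x‖) ^ (p - 2))
      (((p - 2) * (μ + ‖x‖) ^ (p - 3)) • (‖x‖⁻¹ • innerSL ℝ x)) x := by
    have h := (Real.hasDerivAt_rpow_const (p := p - 2) (Or.inl ha.ne')).comp_hasFDerivAt x
      ((hasFDerivAt_norm_of_ne_zero hx).const_add μ)
    rwa [show p - 2 - 1 = p - 3 by ring] at h
  have h := hg.smul (hasFDerivAt_id x)
  rw [smul_smul] at h
  exact h

theorem mul_le_add_inner_sq_div_norm (hμ : 0 ≤ μ) {x : F} (hx : x ≠ 0) (y : F) :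
    min 1 (p - 1) * (μ + ‖x‖) * ‖y‖ ^ 2 ≤
      (μ + ‖x‖) * ‖y‖ ^ 2 + (p - 2) * ⟪x, y⟫ ^ 2 / ‖x‖ := by
  have hxpos : 0 < ‖x‖ := norm_pos_iff.2 hx
  have hB : 0 ≤ (μ + ‖x‖) * ‖y‖ ^ 2 := by positivity
  rcases le_or_gt 2 p with hp | hp
  · have : 0 ≤ (p - 2) * ⟪x, y⟫ ^ 2 / ‖x‖ := by have := sub_nonneg.2 hp; positivity
    nlinarith [min_le_left 1 (p - 1)]
  · have hcs : ⟪x, y⟫ ^ 2 / ‖x‖ ≤ ‖x‖ * ‖y‖ ^ 2 := by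
      rw [div_le_iff₀ hxpos]
      nlinarith [abs_real_inner_le_norm x y, sq_abs ⟪x, y⟫, abs_nonneg ⟪x, y⟫]
    calc min 1 (p - 1) * (μ + ‖x‖) * ‖y‖ ^ 2
        ≤ (p - 1) * (μ + ‖x‖) * ‖y‖ ^ 2 := by gcongr; exact min_le_right _ _
      _ ≤ (μ + ‖x‖) * ‖y‖ ^ 2 + (p - 2) * (‖x‖ * ‖y‖ ^ 2) := by
        nlinarith [mul_nonneg (mul_nonneg (sub_nonneg.2 hp.le) hμ) (sq_nonneg ‖y‖)]
      _ ≤ (μ + ‖x‖) * ‖y‖ ^ 2 + (p - 2) * ⟪x, y⟫ ^ 2 / ‖x‖ := by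
        rw [mul_div_assoc]; nlinarith

theorem inner_fderiv_pStress_apply_self (hμ : 0 ≤ μ) {x : F} (hx : x ≠ 0) (y : F) :
    ⟪fderiv ℝ (pStress μ p) x y, y⟫ =
      (μ + ‖x‖) ^ (p - 2) * ‖y‖ ^ 2 + (p - 2) * (μ + ‖x‖) ^ (p - 3) * ⟪x, y⟫ ^ 2 / ‖x‖ := by
  rw [(hasFDerivAt_pStress hμ hx).fderiv]
  simp only [add_apply, ContinuousLinearMap.smulRight_apply, smul_apply, innerSL_apply_apply,
    ContinuousLinearMap.id_apply, inner_add_left, real_inner_smul_left,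
    real_inner_self_eq_norm_sq, smul_eq_mul]
  ring

theorem le_inner_fderiv_pStress_apply_self (hμ : 0 < μ) (x y : F) :
    min 1 (p - 1) * (μ + ‖x‖) ^ (p - 2) * ‖y‖ ^ 2 ≤ ⟪fderiv ℝ (pStress μ p) x y, y⟫ := by
  rcases eq_or_ne x 0 with rfl | hx
  · rw [(hasFDerivAt_pStress_zero hμ).fderiv]
    rw [norm_zero, add_zero, smul_apply, ContinuousLinearMap.id_apply, real_inner_smul_left,
      real_inner_self_eq_norm_sq, mul_assoc]
    exact mul_le_of_le_one_left (by positivity) (min_le_left _ _)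
  · have ha : 0 < μ + ‖x‖ := by positivity
    have hpow : (μ + ‖x‖) ^ (p - 2) = (μ + ‖x‖) ^ (p - 3) * (μ + ‖x‖) := by
      rw [← Real.rpow_add_one ha.ne']; ring_nf
    calc min 1 (p - 1) * (μ + ‖x‖) ^ (p - 2) * ‖y‖ ^ 2
        = (μ + ‖x‖) ^ (p - 3) * (min 1 (p - 1) * (μ + ‖x‖) * ‖y‖ ^ 2) := by rw [hpow]; ring
      _ ≤ (μ + ‖x‖) ^ (p - 3) * ((μ + ‖x‖) * ‖y‖ ^ 2 + (p - 2) * ⟪x, y⟫ ^ 2 / ‖x‖) := by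
        gcongr; exact mul_le_add_inner_sq_div_norm hμ.le hx y
      _ = ⟪fderiv ℝ (pStress μ p) x y, y⟫ := by
        rw [inner_fderiv_pStress_apply_self hμ.le hx, hpow]; ring

end InnerProductSpace

noncomputable def frobEquiv (ι κ : Type*) [Fintype ι] [Fintype κ] :
    (ι → κ → ℝ) ≃L[ℝ] EuclideanSpace ℝ (ι × κ) :=
  (LinearEquiv.curry ℝ ℝ ι κ).symm.toContinuousLinearEquiv.trans
    (EuclideanSpace.equiv (ι × κ) ℝ).symm

section Frobenius

variable {ι κ : Type*} [Fintype ι] [Fintype κ]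

@[simp]
theorem frobEquiv_apply (A : ι → κ → ℝ) (ij : ι × κ) : frobEquiv ι κ A ij = A ij.1 ij.2 := rfl

theorem inner_frobEquiv (A B : ι → κ → ℝ) :
    ⟪frobEquiv ι κ A, frobEquiv ι κ B⟫ = ∑ i, ∑ j, A i j * B i j := by
  simp [PiLp.inner_apply, Fintype.sum_prod_type, mul_comm]

end Frobenius

theorem frobF_eq_norm (A : Fin 3 → Fin 3 → ℝ) : frobF A = ‖frobEquiv (Fin 3) (Fin 3) A‖ := by
  simp [frobF, EuclideanSpace.norm_eq, Fintype.sum_prod_type]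

theorem SmapF_eq_comp (μ p : ℝ) :
    SmapF μ p = (frobEquiv (Fin 3) (Fin 3)).symm ∘ pStress μ p ∘ frobEquiv (Fin 3) (Fin 3) := by
  funext A
  apply (frobEquiv (Fin 3) (Fin 3)).injective
  ext ⟨i, j⟩
  simp [SmapF, pStress, frobF_eq_norm]

theorem sum_apply_basisMat_mul (L : (Fin 3 → Fin 3 → ℝ) →L[ℝ] (Fin 3 → Fin 3 → ℝ))
    (B : Fin 3 → Fin 3 → ℝ) :
    ∑ i, ∑ j, ∑ k, ∑ l, L (basisMat k l) i j * B i j * B k l = ∑ i, ∑ j, L B i j * B i j := by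
  have hB : B = ∑ k, ∑ l, B k l • basisMat k l := by
    ext a b
    simp [basisMat, ite_and]
  have hLB : ∀ i j, L B i j = ∑ k, ∑ l, B k l * L (basisMat k l) i j := by
    intro i j
    conv_lhs => rw [hB]
    simp [map_sum, map_smul]
  simp only [hLB, Finset.sum_mul]
  congr! 4
  ring

/-- Ellipticity of the derivative of the p-structure tensor, μ > 0, p > 1. -/
theorem statement2 (p μ : ℝ) (hp : 1 < p) (hμ : 0 < μ) :
    ∃ C₁ : ℝ, 0 < C₁ ∧ ∀ A B : Fin 3 → Fin 3 → ℝ,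
      C₁ * (μ + frobF A) ^ (p - 2) * (frobF B) ^ 2 ≤
        ∑ i, ∑ j, ∑ k, ∑ l,
          (fderiv ℝ (SmapF μ p) A (basisMat k l)) i j * B i j * B k l := by
  refine ⟨min 1 (p - 1), lt_min one_pos (sub_pos.2 hp), fun A B => ?_⟩
  set e := frobEquiv (Fin 3) (Fin 3)
  have hD : fderiv ℝ (SmapF μ p) A =
      (e.symm : _ →L[ℝ] _).comp ((fderiv ℝ (pStress μ p) (e A)).comp (e : _ →L[ℝ] _)) := by
    rw [SmapF_eq_comp, e.symm.comp_fderiv, e.comp_right_fderiv]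
  rw [sum_apply_basisMat_mul, ← inner_frobEquiv, hD, frobF_eq_norm, frobF_eq_norm]
  simpa [e] using le_inner_fderiv_pStress_apply_self hμ (e A) (e B)
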